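/- arXiv:math/0504145 — 3 statements merged into one kernel-verified Lean document; each statement's English description precedes it below -/
import Mathlib

section
/- Let (g, g_0) = (so_{2n}, gl_n) with n odd, n ≥ 3. Then the commuting variety C(g_1) = {(ξ, η) ∈ g_1 × g_1 : [ξ, η] = 0} is reducible; in fact it has at least three irreducible components. -/
/-- The Zariski topology on a `K`-module `V`: the coarsest topology making every
polynomial function in linear functionals continuous (induced from the prime spectrum
of the polynomial ring on the dual space).  For a finite-dimensional vector space this
is the classical Zariski topology. -/
noncomputable def zariskiTop (K V : Type*) [Field K] [AddCommGroup V] [Module K V] :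
    TopologicalSpace V :=
  TopologicalSpace.induced
    (fun v => (⟨RingHom.ker (MvPolynomial.eval (fun f : Module.Dual K V => f v)),
        RingHom.ker_isPrime _⟩ : PrimeSpectrum (MvPolynomial (Module.Dual K V) K)))
    inferInstance

/-- Zariski closure of a subset of a `K`-module. -/
noncomputable def zClosure (K : Type*) {V : Type*} [Field K] [AddCommGroup V] [Module K V]
    (S : Set V) : Set V :=
  @closure V (zariskiTop K V) S

/-- Irreducibility of a subset in the Zariski topology. -/
def zIrreducible (K : Type*) {V : Type*} [Field K] [AddCommGroup V] [Module K V]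
    (S : Set V) : Prop :=
  @IsIrreducible V (zariskiTop K V) S

/-- The irreducible components of a subset `C`, i.e. the maximal Zariski-irreducible
subsets of `C`. -/
def zIrredComponentsIn (K : Type*) {V : Type*} [Field K] [AddCommGroup V] [Module K V]
    (C : Set V) : Set (Set V) :=
  {S | S ⊆ C ∧ zIrreducible K S ∧ ∀ T, T ⊆ C → zIrreducible K T → S ⊆ T → T = S}

/-- The dimension of a subset of a `K`-module: the topological Krull dimension in the
(subspace) Zariski topology. -/
noncomputable def zDim (K : Type*) {V : Type*} [Field K] [AddCommGroup V] [Module K V]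
    (S : Set V) : WithBot ℕ∞ :=
  @topologicalKrullDim S (TopologicalSpace.induced Subtype.val (zariskiTop K V))


namespace CVaux

open Matrix

section Top
variable (K : Type*) {V : Type*} [Field K] [AddCommGroup V] [Module K V]

lemma zclosed_eval (q : MvPolynomial (Module.Dual K V) K) :
    @IsClosed V (zariskiTop K V)
      {v | MvPolynomial.eval (fun f : Module.Dual K V => f v) q = 0} := by
  letI := zariskiTop K V
  rw [show (zariskiTop K V) = TopologicalSpace.induced _ _ from rfl] at *
  rw [isClosed_induced_iff]
  refine ⟨PrimeSpectrum.zeroLocus {q}, PrimeSpectrum.isClosed_zeroLocus _, ?_⟩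
  ext v
  simp [PrimeSpectrum.mem_zeroLocus, Set.singleton_subset_iff, RingHom.mem_ker]


lemma zclosed_dual (l : Module.Dual K V) :
    @IsClosed V (zariskiTop K V) {v | l v = 0} := by
  have h := zclosed_eval (K := K) (V := V) (MvPolynomial.X l)
  simpa using h

lemma exists_zcomponent {C : Set V} {x : V} (hx : x ∈ C) :
    ∃ S, S ∈ zIrredComponentsIn K C ∧ x ∈ S := by
  letI := zariskiTop K V
  have H : ∀ c ⊆ {T : Set V | T ⊆ C ∧ IsIrreducible T ∧ x ∈ T}, IsChain (· ⊆ ·) c →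
      c.Nonempty → ∃ ub ∈ {T : Set V | T ⊆ C ∧ IsIrreducible T ∧ x ∈ T}, ∀ s ∈ c, s ⊆ ub := by
    rintro c hcS hchain ⟨c₀, hc₀⟩
    refine ⟨⋃₀ c, ⟨?_, ⟨?_, ?_⟩, ?_⟩, fun s hs => Set.subset_sUnion_of_mem hs⟩
    · exact Set.sUnion_subset fun T hT => (hcS hT).1
    · exact ⟨x, c₀, hc₀, (hcS hc₀).2.2⟩
    · rintro u w hu hw ⟨a, ⟨Ta, hTa, haTa⟩, hau⟩ ⟨b, ⟨Tb, hTb, hbTb⟩, hbw⟩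
      rcases hchain.total hTa hTb with h | h
      · obtain ⟨z, hz⟩ := (hcS hTb).2.1.2 u w hu hw ⟨a, h haTa, hau⟩ ⟨b, hbTb, hbw⟩
        exact ⟨z, ⟨Tb, hTb, hz.1⟩, hz.2⟩
      · obtain ⟨z, hz⟩ := (hcS hTa).2.1.2 u w hu hw ⟨a, haTa, hau⟩ ⟨b, h hbTb, hbw⟩
        exact ⟨z, ⟨Ta, hTa, hz.1⟩, hz.2⟩
    · exact ⟨c₀, hc₀, (hcS hc₀).2.2⟩
  obtain ⟨m, hxm, hm⟩ := zorn_subset_nonempty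
      {T : Set V | T ⊆ C ∧ IsIrreducible T ∧ x ∈ T} H {x}
      ⟨Set.singleton_subset_iff.2 hx, isIrreducible_singleton, rfl⟩
  exact ⟨m, ⟨hm.prop.1, hm.prop.2.1, fun T hTC hTirr hmT =>
      (hm.eq_of_subset ⟨hTC, hTirr, hmT hm.prop.2.2⟩ hmT).symm⟩, hm.prop.2.2⟩

lemma zirr_subset_of_cover {S F₁ F₂ F₃ : Set V}
    (hS : zIrreducible K S)
    (h1 : @IsClosed V (zariskiTop K V) F₁) (h2 : @IsClosed V (zariskiTop K V) F₂)
    (h3 : @IsClosed V (zariskiTop K V) F₃) (hsub : S ⊆ F₁ ∪ F₂ ∪ F₃) :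
    S ⊆ F₁ ∨ S ⊆ F₂ ∨ S ⊆ F₃ := by
  letI := zariskiTop K V
  have h := (isPreirreducible_iff_isClosed_union_isClosed.1 hS.2) (F₁ ∪ F₂) F₃
    (h1.union h2) h3 (by rwa [Set.union_assoc] at hsub ⊢)
  rcases h with h | h
  · rcases (isPreirreducible_iff_isClosed_union_isClosed.1 hS.2) F₁ F₂ h1 h2 h with h' | h'
    · exact Or.inl h'
    · exact Or.inr (Or.inl h')
  · exact Or.inr (Or.inr h)

end Top

section LinAlg
variable (K : Type*) [Field K] (n : ℕ)

/-- Skew-symmetric matrices as a submodule. -/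
def Sk : Submodule K (Matrix (Fin n) (Fin n) K) where
  carrier := {A | Aᵀ = -A}
  add_mem' := by
    intro a b ha hb
    simp only [Set.mem_setOf_eq] at *
    rw [transpose_add, ha, hb, neg_add]
  zero_mem' := by simp
  smul_mem' := by
    intro c a ha
    simp only [Set.mem_setOf_eq] at *
    rw [transpose_smul, ha, smul_neg]

abbrev Wsp := (↥(Sk K n)) × (↥(Sk K n))

/-- The key linear map `(U,V) ↦ U * p.2 - V * p.1` on pairs of skew matrices. -/
def phi (p : Matrix (Fin n) (Fin n) K × Matrix (Fin n) (Fin n) K) :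
    Wsp K n →ₗ[K] Matrix (Fin n) (Fin n) K where
  toFun w := (w.1 : Matrix (Fin n) (Fin n) K) * p.2 - (w.2 : Matrix (Fin n) (Fin n) K) * p.1
  map_add' a b := by
    simp only [Prod.fst_add, Prod.snd_add, Submodule.coe_add, add_mul]
    abel
  map_smul' c a := by
    simp only [Prod.smul_fst, Prod.smul_snd, Submodule.coe_smul, smul_mul_assoc,
      RingHom.id_apply, smul_sub]

lemma phi_add (p q) (w : Wsp K n) : phi K n (p + q) w = phi K n p w + phi K n q w := by
  simp only [phi, LinearMap.coe_mk, AddHom.coe_mk, Prod.fst_add, Prod.snd_add, mul_add]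
  abel

lemma phi_smul (c : K) (p) (w : Wsp K n) : phi K n (c • p) w = c • phi K n p w := by
  simp only [phi, LinearMap.coe_mk, AddHom.coe_mk, Prod.smul_fst, Prod.smul_snd,
    mul_smul_comm, smul_sub]

end LinAlg

section Poly
variable (K : Type*) [Field K] (n : ℕ)
variable {Va : Type*} [AddCommGroup Va] [Module K Va]

/-- `v ↦ φ_{π v} w` as a linear map in `v`, for fixed `w`. -/
def phiAt (π : Va →ₗ[K] Matrix (Fin n) (Fin n) K × Matrix (Fin n) (Fin n) K)
    (w : Wsp K n) : Va →ₗ[K] Matrix (Fin n) (Fin n) K where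
  toFun v := phi K n (π v) w
  map_add' a b := by
    show phi K n (π (a + b)) w = _
    rw [LinearMap.map_add π]; exact phi_add K n _ _ _
  map_smul' c a := by
    show phi K n (π (c • a)) w = _
    rw [LinearMap.map_smul π]; exact phi_smul K n c _ _

/-- The determinant function `v ↦ det (ψ ∘ φ_{π v})` as an `MvPolynomial` in linear
functionals. -/
noncomputable def detPoly (ψ : Matrix (Fin n) (Fin n) K →ₗ[K] Wsp K n)
    (π : Va →ₗ[K] Matrix (Fin n) (Fin n) K × Matrix (Fin n) (Fin n) K) :
    MvPolynomial (Module.Dual K Va) K :=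
  Matrix.det (Matrix.of fun i j : Fin (Module.finrank K (Wsp K n)) =>
    (MvPolynomial.X (((Module.finBasis K (Wsp K n)).coord i).comp
      (ψ.comp (phiAt K n π ((Module.finBasis K (Wsp K n)) j)))) :
      MvPolynomial (Module.Dual K Va) K))

lemma detPoly_eval (ψ : Matrix (Fin n) (Fin n) K →ₗ[K] Wsp K n)
    (π : Va →ₗ[K] Matrix (Fin n) (Fin n) K × Matrix (Fin n) (Fin n) K) (v : Va) :
    MvPolynomial.eval (fun f : Module.Dual K Va => f v) (detPoly K n ψ π) =
      LinearMap.det (ψ.comp (phi K n (π v))) := by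
  classical
  rw [detPoly, RingHom.map_det]
  rw [← LinearMap.det_toMatrix (Module.finBasis K (Wsp K n))]
  congr 1
  ext i j
  simp [LinearMap.toMatrix_apply, Module.Basis.coord_apply, phiAt, phi]

lemma det_zero_of_ker (ψ : Matrix (Fin n) (Fin n) K →ₗ[K] Wsp K n)
    (p : Matrix (Fin n) (Fin n) K × Matrix (Fin n) (Fin n) K) (w : Wsp K n)
    (hw : w ≠ 0) (hker : phi K n p w = 0) :
    LinearMap.det (ψ.comp (phi K n p)) = 0 := by
  by_contra h
  have hinj : Function.Injective (ψ.comp (phi K n p)) := by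
    have h2 := (LinearMap.equivOfDetNeZero _ h).injective
    intro x y hxy
    exact h2 (by simpa using hxy)
  apply hw
  apply hinj
  simp [LinearMap.comp_apply, hker]

end Poly


section Witness
variable (K : Type*) [Field K] (n : ℕ)

/-- skew tridiagonal witness: pairs (0,1),(2,3),... -/
def Yw : Matrix (Fin n) (Fin n) K := Matrix.of fun i j =>
  if i.val % 2 = 0 ∧ j.val = i.val + 1 then 1
  else if j.val % 2 = 0 ∧ i.val = j.val + 1 then -1 else 0

/-- skew tridiagonal witness: pairs (1,2),(3,4),... -/
def Yw' : Matrix (Fin n) (Fin n) K := Matrix.of fun i j =>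
  if i.val % 2 = 1 ∧ j.val = i.val + 1 then 1
  else if j.val % 2 = 1 ∧ i.val = j.val + 1 then -1 else 0

lemma Yw_skew : (Yw K n)ᵀ = -(Yw K n) := by
  ext i j
  simp only [transpose_apply, Matrix.neg_apply, Yw, of_apply]
  obtain ⟨i, hi⟩ := i; obtain ⟨j, hj⟩ := j
  simp only [Fin.val_mk]
  split_ifs with h1 h2 h3 h4 h5 h6 <;>
    first
      | (exfalso; omega)
      | ring1

lemma Yw'_skew : (Yw' K n)ᵀ = -(Yw' K n) := by
  ext i j
  simp only [transpose_apply, Matrix.neg_apply, Yw', of_apply]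
  obtain ⟨i, hi⟩ := i; obtain ⟨j, hj⟩ := j
  simp only [Fin.val_mk]
  split_ifs with h1 h2 h3 h4 h5 h6 <;>
    first
      | (exfalso; omega)
      | ring1

lemma Yw_ne_zero (hn : 2 ≤ n) : Yw K n ≠ 0 := by
  intro h
  have := congrFun (congrFun h ⟨0, by omega⟩) ⟨1, by omega⟩
  simp [Yw] at this

variable {K n}

lemma mulYw'_col_odd (U : Matrix (Fin n) (Fin n) K) (a : Fin n) (b : ℕ) (hb : b < n)
    (h1 : b % 2 = 1) (c : Fin n) (hc : (c : ℕ) = b + 1) :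
    (U * Yw' K n) a ⟨b, hb⟩ = -U a c := by
  rw [mul_apply, Finset.sum_eq_single c]
  · simp only [Yw', of_apply]
    rw [if_neg (by first | omega | (simp only [Fin.val_mk]; omega)),
        if_pos (by refine ⟨?_, ?_⟩ <;> first | trivial | omega | (simp only [Fin.val_mk]; omega))]
    ring
  · intro t _ htne
    have htv : t.val ≠ c.val := fun hh => htne (Fin.ext hh)
    simp only [Yw', of_apply]
    rw [if_neg (by first | omega | (simp only [Fin.val_mk]; omega)),
        if_neg (by first | omega | (simp only [Fin.val_mk]; omega))]
    ring
  · intro hmem; exact absurd (Finset.mem_univ _) hmem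

lemma mulYw'_col_even (U : Matrix (Fin n) (Fin n) K) (a : Fin n) (b : ℕ) (hb : b < n)
    (h1 : b % 2 = 0) (h2 : 1 ≤ b) (c : Fin n) (hc : (c : ℕ) = b - 1) :
    (U * Yw' K n) a ⟨b, hb⟩ = U a c := by
  rw [mul_apply, Finset.sum_eq_single c]
  · simp only [Yw', of_apply]
    rw [if_pos (by refine ⟨?_, ?_⟩ <;> first | trivial | omega | (simp only [Fin.val_mk]; omega))]
    ring
  · intro t _ htne
    have htv : t.val ≠ c.val := fun hh => htne (Fin.ext hh)
    simp only [Yw', of_apply]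
    rw [if_neg (by first | omega | (simp only [Fin.val_mk]; omega)),
        if_neg (by first | omega | (simp only [Fin.val_mk]; omega))]
    ring
  · intro hmem; exact absurd (Finset.mem_univ _) hmem

lemma mulYw'_col_zero (U : Matrix (Fin n) (Fin n) K) (a : Fin n) (hb : 0 < n) :
    (U * Yw' K n) a ⟨0, hb⟩ = 0 := by
  rw [mul_apply]
  apply Finset.sum_eq_zero
  intro t _
  simp only [Yw', of_apply]
  rw [if_neg (by first | omega | (simp only [Fin.val_mk]; omega)),
      if_neg (by first | omega | (simp only [Fin.val_mk]; omega))]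
  ring

lemma mulYw_col_odd (V : Matrix (Fin n) (Fin n) K) (a : Fin n) (b : ℕ) (hb : b < n)
    (h1 : b % 2 = 1) (c : Fin n) (hc : (c : ℕ) = b - 1) :
    (V * Yw K n) a ⟨b, hb⟩ = V a c := by
  rw [mul_apply, Finset.sum_eq_single c]
  · simp only [Yw, of_apply]
    rw [if_pos (by refine ⟨?_, ?_⟩ <;> first | trivial | omega | (simp only [Fin.val_mk]; omega))]
    ring
  · intro t _ htne
    have htv : t.val ≠ c.val := fun hh => htne (Fin.ext hh)
    simp only [Yw, of_apply]
    rw [if_neg (by first | omega | (simp only [Fin.val_mk]; omega)),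
        if_neg (by first | omega | (simp only [Fin.val_mk]; omega))]
    ring
  · intro hmem; exact absurd (Finset.mem_univ _) hmem

lemma mulYw_col_even (V : Matrix (Fin n) (Fin n) K) (a : Fin n) (b : ℕ) (hb : b < n)
    (h1 : b % 2 = 0) (h2 : b + 1 < n) (c : Fin n) (hc : (c : ℕ) = b + 1) :
    (V * Yw K n) a ⟨b, hb⟩ = -V a c := by
  rw [mul_apply, Finset.sum_eq_single c]
  · simp only [Yw, of_apply]
    rw [if_neg (by first | omega | (simp only [Fin.val_mk]; omega)),
        if_pos (by refine ⟨?_, ?_⟩ <;> first | trivial | omega | (simp only [Fin.val_mk]; omega))]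
    ring
  · intro t _ htne
    have htv : t.val ≠ c.val := fun hh => htne (Fin.ext hh)
    simp only [Yw, of_apply]
    rw [if_neg (by first | omega | (simp only [Fin.val_mk]; omega)),
        if_neg (by first | omega | (simp only [Fin.val_mk]; omega))]
    ring
  · intro hmem; exact absurd (Finset.mem_univ _) hmem

lemma mulYw_col_top (V : Matrix (Fin n) (Fin n) K) (a : Fin n) (b : ℕ) (hb : b < n)
    (h1 : b % 2 = 0) (h2 : b + 1 = n) :
    (V * Yw K n) a ⟨b, hb⟩ = 0 := by
  rw [mul_apply]
  apply Finset.sum_eq_zero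
  intro t _
  simp only [Yw, of_apply]
  have htl : t.val < n := t.isLt
  rw [if_neg (by first | omega | (simp only [Fin.val_mk]; omega)),
      if_neg (by first | omega | (simp only [Fin.val_mk]; omega))]
  ring

end Witness

section Chain
variable {K : Type*} [Field K] [CharZero K]

private lemma eq_zero_of_self_eq_neg' {x : K} (h : x = -x) : x = 0 := by
  have h2 : (2 : K) * x = 0 := by linear_combination h
  rcases mul_eq_zero.1 h2 with h' | h'
  · exact absurd h' two_ne_zero
  · exact h'

lemma chainLemma (n : ℕ) (hn3 : 3 ≤ n) (hodd : n % 2 = 1) (u v : ℕ → ℕ → K)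
    (hu_skew : ∀ a b, a < n → b < n → u a b = -u b a)
    (hv_skew : ∀ a b, a < n → b < n → v a b = -v b a)
    (hv1 : ∀ a, a < n → v a 1 = 0)
    (hu_top : ∀ a, a < n → u a (n - 2) = 0)
    (hu_even : ∀ a c, a < n → c < n → c % 2 = 0 → 2 ≤ c → u a c = -v a (c - 2))
    (hu_odd : ∀ a c, a < n → c % 2 = 1 → c + 2 < n → u a c = -v a (c + 2)) :
    ∀ a b, a < n → b < n → v a b = 0 ∧ u a b = 0 := by
  have hv_diag : ∀ a, a < n → v a a = 0 :=
    fun a ha => eq_zero_of_self_eq_neg' (hv_skew a a ha ha)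
  -- transport relations
  have Ree : ∀ a c, a % 2 = 0 → c % 2 = 0 → a + 2 < n → c + 2 < n →
      v (a + 2) c = v a (c + 2) := by
    intro a c ha hc han hcn
    have h1 : u (a+2) (c+2) = -v (a+2) c := by
      have := hu_even (a+2) (c+2) (by omega) (by omega) (by omega) (by omega)
      simpa using this
    have h2 : u (c+2) (a+2) = -v (c+2) a := by
      have := hu_even (c+2) (a+2) (by omega) (by omega) (by omega) (by omega)
      simpa using this
    have h3 := hu_skew (a+2) (c+2) (by omega) (by omega)
    have hvs := hv_skew (c+2) a (by omega) (by omega)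
    linear_combination h1 + h2 - h3 - hvs
  have Roo : ∀ a c, a % 2 = 1 → c % 2 = 1 → a + 2 < n → c + 2 < n →
      v a (c + 2) = v (a + 2) c := by
    intro a c ha hc han hcn
    have h1 := hu_odd a c (by omega) hc hcn
    have h2 := hu_odd c a (by omega) ha han
    have h3 := hu_skew a c (by omega) (by omega)
    have hvs := hv_skew c (a+2) (by omega) (by omega)
    linear_combination h1 + h2 - h3 - hvs
  have Rme : ∀ a d, a % 2 = 0 → d % 2 = 1 → a + 2 < n → d + 2 < n →
      v (a + 2) (d + 2) = v a d := by
    intro a d ha hd han hdn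
    have h1 := hu_odd (a+2) d (by omega) hd hdn
    have h2 : u d (a+2) = -v d a := by
      have := hu_even d (a+2) (by omega) (by omega) (by omega) (by omega)
      simpa using this
    have h3 := hu_skew (a+2) d (by omega) (by omega)
    have hvs := hv_skew d a (by omega) (by omega)
    linear_combination h1 + h2 - h3 - hvs
  -- row n-2 vanishes away from the corner
  have hrow : ∀ c, c < n → c ≠ n - 1 → v (n - 2) c = 0 := by
    intro c hc hc1
    rcases eq_or_ne c (n-2) with rfl | hcn2
    · exact hv_diag _ (by omega)
    rcases eq_or_ne c 1 with rfl | hc1'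
    · exact hv1 _ (by omega)
    rcases Nat.even_or_odd c with hce | hco
    · have hce2 : c % 2 = 0 := Nat.even_iff.1 hce
      have hcb : c + 2 < n := by omega
      have h1 : u (n-2) (c+2) = -v (n-2) c := by
        have := hu_even (n-2) (c+2) (by omega) (by omega) (by omega) (by omega)
        simpa using this
      have h3 := hu_skew (n-2) (c+2) (by omega) (by omega)
      have htop := hu_top (c+2) (by omega)
      linear_combination h1 - h3 + htop
    · have hco2 : c % 2 = 1 := Nat.odd_iff.1 hco
      have h1 : u (n-2) (c-2) = -v (n-2) c := by
        have := hu_odd (n-2) (c-2) (by omega) (by omega) (by omega)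
        have e : c - 2 + 2 = c := by omega
        rwa [e] at this
      have h3 := hu_skew (n-2) (c-2) (by omega) (by omega)
      have htop := hu_top (c-2) (by omega)
      linear_combination h1 - h3 + htop
  -- transported chains
  have claim_ee : ∀ t p q, p % 2 = 0 → q % 2 = 0 → p + 2*t < n → q + 2*t < n →
      v p (q + 2*t) = v (p + 2*t) q := by
    intro t
    induction t with
    | zero => intro p q _ _ _ _; simp
    | succ t ih =>
      intro p q hp hq hpn hqn
      have e1 : q + 2*(t+1) = (q + 2*t) + 2 := by omega
      have e2 : p + 2*(t+1) = (p + 2) + 2*t := by omega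
      rw [e1, e2]
      rw [← Ree p (q + 2*t) hp (by omega) (by omega) (by omega)]
      exact ih (p+2) q (by omega) hq (by omega) (by omega)
  have claim_oo : ∀ t p q, p % 2 = 1 → q % 2 = 1 → p + 2*t < n → q + 2*t < n →
      v p (q + 2*t) = v (p + 2*t) q := by
    intro t
    induction t with
    | zero => intro p q _ _ _ _; simp
    | succ t ih =>
      intro p q hp hq hpn hqn
      have e1 : q + 2*(t+1) = (q + 2*t) + 2 := by omega
      have e2 : p + 2*(t+1) = (p + 2) + 2*t := by omega
      rw [e1, e2]
      rw [Roo p (q + 2*t) hp (by omega) (by omega) (by omega)]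
      exact ih (p+2) q (by omega) hq (by omega) (by omega)
  have claim_me : ∀ t a d, a % 2 = 0 → d % 2 = 1 → a + 2*t < n → d + 2*t < n →
      v (a + 2*t) (d + 2*t) = v a d := by
    intro t
    induction t with
    | zero => intro a d _ _ _ _; simp
    | succ t ih =>
      intro a d ha hd han hdn
      have e1 : a + 2*(t+1) = (a + 2*t) + 2 := by omega
      have e2 : d + 2*(t+1) = (d + 2*t) + 2 := by omega
      rw [e1, e2, Rme (a + 2*t) (d + 2*t) (by omega) (by omega) (by omega) (by omega)]
      exact ih a d ha hd (by omega) (by omega)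
  -- even-even entries vanish
  have even_zero : ∀ p q, p % 2 = 0 → q % 2 = 0 → p < n → q < n → v p q = 0 := by
    have half : ∀ p q, p % 2 = 0 → q % 2 = 0 → p < n → q < n → p < q → v p q = 0 := by
      intro p q hp hq hpn hqn hlt
      set t := (q - p) / 2 with ht
      have hq2 : q = p + 2*t := by omega
      have h := claim_ee t p p hp hp (by omega) (by omega)
      rw [← hq2] at h
      have := hv_skew q p hqn hpn
      rw [hq2] at *
      exact eq_zero_of_self_eq_neg' (by linear_combination h + this)
    intro p q hp hq hpn hqn
    rcases lt_trichotomy p q with h | h | h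
    · exact half p q hp hq hpn hqn h
    · subst h; exact hv_diag p hpn
    · rw [hv_skew p q hpn hqn, half q p hq hp hqn hpn h]
      ring
  -- odd-odd entries vanish
  have odd_zero : ∀ p q, p % 2 = 1 → q % 2 = 1 → p < n → q < n → v p q = 0 := by
    have half : ∀ p q, p % 2 = 1 → q % 2 = 1 → p < n → q < n → p < q → v p q = 0 := by
      intro p q hp hq hpn hqn hlt
      set t := (q - p) / 2 with ht
      have hq2 : q = p + 2*t := by omega
      have h := claim_oo t p p hp hp (by omega) (by omega)
      rw [← hq2] at h
      have := hv_skew q p hqn hpn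
      rw [hq2] at *
      exact eq_zero_of_self_eq_neg' (by linear_combination h + this)
    intro p q hp hq hpn hqn
    rcases lt_trichotomy p q with h | h | h
    · exact half p q hp hq hpn hqn h
    · subst h; exact hv_diag p hpn
    · rw [hv_skew p q hpn hqn, half q p hq hp hqn hpn h]
      ring
  -- mixed entries vanish
  have mixed_zero : ∀ p d, p % 2 = 0 → d % 2 = 1 → p < n → d < n → v p d = 0 := by
    intro p d hp hd hpn hdn
    rcases le_or_gt d (p+1) with hle | hgt
    · -- descend to column 1
      set t := (d - 1) / 2 with ht
      have hd2 : d = 1 + 2*t := by omega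
      have hp2 : p = (p - 2*t) + 2*t := by omega
      have h := claim_me t (p - 2*t) 1 (by omega) (by omega) (by omega) (by omega)
      rw [← hp2, ← hd2] at h
      rw [h]
      exact hv1 _ (by omega)
    · -- descend to row 0, then ascend to row n-2
      set t := p / 2 with ht
      have hp2 : p = 0 + 2*t := by omega
      have hd2 : d = (d - p) + 2*t := by omega
      have h := claim_me t 0 (d - p) (by omega) (by omega) (by omega) (by omega)
      rw [← hp2, ← hd2] at h
      rw [h]
      -- now kill v 0 (d - p)
      set e := d - p with he
      have heo : e % 2 = 1 := by omega
      have hen : e ≤ n - 2 := by omega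
      set t2 := (n - 2 - e) / 2 with ht2
      have h2 := claim_me t2 0 e (by omega) (by omega) (by omega) (by omega)
      have e2 : e + 2*t2 = n - 2 := by omega
      rw [e2] at h2
      rw [← h2, hv_skew (0 + 2*t2) (n-2) (by omega) (by omega),
          hrow (0 + 2*t2) (by omega) (by omega)]
      ring
  have v_zero : ∀ a b, a < n → b < n → v a b = 0 := by
    intro a b ha hb
    rcases Nat.even_or_odd a with hae | hao <;> rcases Nat.even_or_odd b with hbe | hbo
    · exact even_zero a b (Nat.even_iff.1 hae) (Nat.even_iff.1 hbe) ha hb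
    · exact mixed_zero a b (Nat.even_iff.1 hae) (Nat.odd_iff.1 hbo) ha hb
    · rw [hv_skew a b ha hb, mixed_zero b a (Nat.even_iff.1 hbe) (Nat.odd_iff.1 hao) hb ha]
      ring
    · exact odd_zero a b (Nat.odd_iff.1 hao) (Nat.odd_iff.1 hbo) ha hb
  have u_zero_pos : ∀ a c, a < n → c < n → 1 ≤ c → u a c = 0 := by
    intro a c ha hc hc1
    rcases Nat.even_or_odd c with hce | hco
    · have hc0 : c % 2 = 0 := Nat.even_iff.1 hce
      rw [hu_even a c ha hc hc0 (by omega), v_zero a (c-2) ha (by omega)]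
      ring
    · have hc0 : c % 2 = 1 := Nat.odd_iff.1 hco
      rcases lt_or_ge (c+2) n with hlt | hge
      · rw [hu_odd a c ha hc0 hlt, v_zero a (c+2) ha (by omega)]
        ring
      · have : c = n - 2 := by omega
        rw [this]
        exact hu_top a ha
  have u_zero : ∀ a c, a < n → c < n → u a c = 0 := by
    intro a c ha hc
    rcases Nat.eq_zero_or_pos c with rfl | hc1
    · rcases Nat.eq_zero_or_pos a with rfl | ha1
      · exact eq_zero_of_self_eq_neg' (hu_skew 0 0 ha ha)
      · rw [hu_skew a 0 ha hc, u_zero_pos 0 a hc ha ha1]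
        ring
    · exact u_zero_pos a c ha hc hc1
  exact fun a b ha hb => ⟨v_zero a b ha hb, u_zero a b ha hb⟩

end Chain

section WInj
variable {K : Type*} [Field K] [CharZero K] {n : ℕ}

open Matrix in
theorem witness_inj (hn3 : 3 ≤ n) (hodd : n % 2 = 1)
    (U V : Matrix (Fin n) (Fin n) K) (hU : Uᵀ = -U) (hV : Vᵀ = -V)
    (heq : U * Yw' K n = V * Yw K n) : U = 0 ∧ V = 0 := by
  classical
  set u : ℕ → ℕ → K := fun a b => if h : a < n ∧ b < n then U ⟨a, h.1⟩ ⟨b, h.2⟩ else 0 with hu_def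
  set v : ℕ → ℕ → K := fun a b => if h : a < n ∧ b < n then V ⟨a, h.1⟩ ⟨b, h.2⟩ else 0 with hv_def
  have uU : ∀ (a b : ℕ) (ha : a < n) (hb : b < n), u a b = U ⟨a, ha⟩ ⟨b, hb⟩ := by
    intro a b ha hb; rw [hu_def]; exact dif_pos ⟨ha, hb⟩
  have vV : ∀ (a b : ℕ) (ha : a < n) (hb : b < n), v a b = V ⟨a, ha⟩ ⟨b, hb⟩ := by
    intro a b ha hb; rw [hv_def]; exact dif_pos ⟨ha, hb⟩
  have key : ∀ (a : Fin n) (b : ℕ) (hb : b < n),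
      (U * Yw' K n) a ⟨b, hb⟩ = (V * Yw K n) a ⟨b, hb⟩ := by
    intro a b hb; rw [heq]
  have hu_skew : ∀ a b, a < n → b < n → u a b = -u b a := by
    intro a b ha hb
    have := congrFun (congrFun hU ⟨b, hb⟩) ⟨a, ha⟩
    simp only [transpose_apply, Matrix.neg_apply] at this
    rw [uU a b ha hb, uU b a hb ha, this]
  have hv_skew : ∀ a b, a < n → b < n → v a b = -v b a := by
    intro a b ha hb
    have := congrFun (congrFun hV ⟨b, hb⟩) ⟨a, ha⟩
    simp only [transpose_apply, Matrix.neg_apply] at this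
    rw [vV a b ha hb, vV b a hb ha, this]
  have hv1 : ∀ a, a < n → v a 1 = 0 := by
    intro a ha
    have h0 := key ⟨a, ha⟩ 0 (by omega)
    rw [mulYw'_col_zero _ _ (by omega),
        mulYw_col_even _ _ 0 (by omega) (by omega) (by omega) ⟨1, by omega⟩ (by simp)] at h0
    rw [vV a 1 ha (by omega)]
    have := h0.symm
    rw [neg_eq_zero] at this
    exact this
  have hu_top : ∀ a, a < n → u a (n - 2) = 0 := by
    intro a ha
    have h0 := key ⟨a, ha⟩ (n-1) (by omega)
    rw [mulYw'_col_even _ _ (n-1) (by omega) (by omega) (by omega) ⟨n-2, by omega⟩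
          (by simp only [Fin.val_mk]; try omega),
        mulYw_col_top _ _ (n-1) (by omega) (by omega) (by omega)] at h0
    rw [uU a (n-2) ha (by omega)]
    exact h0
  have hu_even : ∀ a c, a < n → c < n → c % 2 = 0 → 2 ≤ c → u a c = -v a (c - 2) := by
    intro a c ha hc hc0 hc2
    have h0 := key ⟨a, ha⟩ (c-1) (by omega)
    rw [mulYw'_col_odd _ _ (c-1) (by omega) (by omega) ⟨c, hc⟩
          (by simp only [Fin.val_mk]; try omega),
        mulYw_col_odd _ _ (c-1) (by omega) (by omega) ⟨c-2, by omega⟩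
          (by simp only [Fin.val_mk]; try omega)] at h0
    rw [uU a c ha hc, vV a (c-2) ha (by omega)]
    linear_combination -h0
  have hu_odd : ∀ a c, a < n → c % 2 = 1 → c + 2 < n → u a c = -v a (c + 2) := by
    intro a c ha hc0 hc2
    have h0 := key ⟨a, ha⟩ (c+1) (by omega)
    rw [mulYw'_col_even _ _ (c+1) (by omega) (by omega) (by omega) ⟨c, by omega⟩
          (by simp only [Fin.val_mk]; try omega),
        mulYw_col_even _ _ (c+1) (by omega) (by omega) (by omega) ⟨c+2, by omega⟩
          (by simp only [Fin.val_mk]; try omega)] at h0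
    rw [uU a c ha (by omega), vV a (c+2) ha (by omega)]
    exact h0
  have main := chainLemma n hn3 hodd u v hu_skew hv_skew hv1 hu_top hu_even hu_odd
  constructor
  · ext i j
    have := (main i.val j.val i.isLt j.isLt).2
    rw [uU i.val j.val i.isLt j.isLt] at this
    simpa using this
  · ext i j
    have := (main i.val j.val i.isLt j.isLt).1
    rw [vV i.val j.val i.isLt j.isLt] at this
    simpa using this

end WInj


section Blocks
variable {K : Type*} [Field K] [CharZero K] {n : ℕ}

private lemma mat_eq_zero_of_self_eq_neg {M : Matrix (Fin n) (Fin n) K} (h : M = -M) :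
    M = 0 := by
  ext i j
  have := congrFun (congrFun h i) j
  simp only [Matrix.neg_apply] at this
  have h2 : (2 : K) * M i j = 0 := by linear_combination this
  rcases mul_eq_zero.1 h2 with h' | h'
  · exact absurd h' two_ne_zero
  · exact h'

lemma g1_mem_of (b c : Matrix (Fin n) (Fin n) K) (hb : bᵀ = -b) (hc : cᵀ = -c) :
    (fromBlocks 0 b c 0)ᵀ * (fromBlocks 0 1 1 0 : Matrix (Fin n ⊕ Fin n) (Fin n ⊕ Fin n) K)
        = -((fromBlocks 0 1 1 0 : Matrix (Fin n ⊕ Fin n) (Fin n ⊕ Fin n) K) * fromBlocks 0 b c 0)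
      ∧ (fromBlocks 1 0 0 (-1) : Matrix (Fin n ⊕ Fin n) (Fin n ⊕ Fin n) K) * fromBlocks 0 b c 0
          * (fromBlocks 1 0 0 (-1) : Matrix (Fin n ⊕ Fin n) (Fin n ⊕ Fin n) K)
        = -(fromBlocks 0 b c 0) := by
  constructor
  · rw [fromBlocks_transpose, fromBlocks_multiply, fromBlocks_multiply]
    simp [hb, hc, fromBlocks_neg]
  · rw [fromBlocks_multiply, fromBlocks_multiply]
    simp [fromBlocks_neg]

lemma g1_blocks (x : Matrix (Fin n ⊕ Fin n) (Fin n ⊕ Fin n) K)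
    (h1 : xᵀ * (fromBlocks 0 1 1 0 : Matrix (Fin n ⊕ Fin n) (Fin n ⊕ Fin n) K)
        = -((fromBlocks 0 1 1 0 : Matrix (Fin n ⊕ Fin n) (Fin n ⊕ Fin n) K) * x))
    (h2 : (fromBlocks 1 0 0 (-1) : Matrix (Fin n ⊕ Fin n) (Fin n ⊕ Fin n) K) * x
          * (fromBlocks 1 0 0 (-1) : Matrix (Fin n ⊕ Fin n) (Fin n ⊕ Fin n) K) = -x) :
    x = fromBlocks 0 (toBlocks₁₂ x) (toBlocks₂₁ x) 0
      ∧ (toBlocks₁₂ x)ᵀ = -(toBlocks₁₂ x) ∧ (toBlocks₂₁ x)ᵀ = -(toBlocks₂₁ x) := by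
  set a := toBlocks₁₁ x with ha
  set b := toBlocks₁₂ x with hb
  set c := toBlocks₂₁ x with hc
  set d := toBlocks₂₂ x with hd
  have hx : x = fromBlocks a b c d := (fromBlocks_toBlocks x).symm
  rw [hx] at h1 h2
  rw [fromBlocks_multiply, fromBlocks_multiply] at h2
  simp only [Matrix.one_mul, Matrix.mul_one, Matrix.zero_mul, Matrix.mul_zero, add_zero,
    zero_add, Matrix.neg_mul, Matrix.mul_neg, neg_neg, fromBlocks_neg] at h2
  have e11 := congrArg toBlocks₁₁ h2
  have e22 := congrArg toBlocks₂₂ h2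
  simp only [toBlocks_fromBlocks₁₁, toBlocks_fromBlocks₂₂] at e11 e22
  have ha0 : a = 0 := mat_eq_zero_of_self_eq_neg e11
  have hd0 : d = 0 := mat_eq_zero_of_self_eq_neg e22
  rw [fromBlocks_transpose, fromBlocks_multiply, fromBlocks_multiply] at h1
  simp only [Matrix.one_mul, Matrix.mul_one, Matrix.zero_mul, Matrix.mul_zero, add_zero,
    zero_add, fromBlocks_neg] at h1
  have f22 := congrArg toBlocks₂₂ h1
  have f11 := congrArg toBlocks₁₁ h1
  simp only [toBlocks_fromBlocks₂₂, toBlocks_fromBlocks₁₁] at f22 f11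
  exact ⟨by rw [hx, ha0, hd0], f22, f11⟩


lemma commute_blocks (b₁ c₁ b₂ c₂ : Matrix (Fin n) (Fin n) K)
    (h : (fromBlocks 0 b₁ c₁ 0 : Matrix (Fin n ⊕ Fin n) (Fin n ⊕ Fin n) K) * fromBlocks 0 b₂ c₂ 0
       = fromBlocks 0 b₂ c₂ 0 * fromBlocks 0 b₁ c₁ 0) :
    b₁ * c₂ = b₂ * c₁ ∧ c₁ * b₂ = c₂ * b₁ := by
  rw [fromBlocks_multiply, fromBlocks_multiply] at h
  simp only [Matrix.zero_mul, Matrix.mul_zero, add_zero, zero_add] at h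
  have h11 := congrArg toBlocks₁₁ h
  have h22 := congrArg toBlocks₂₂ h
  simp only [toBlocks_fromBlocks₁₁, toBlocks_fromBlocks₂₂] at h11 h22
  exact ⟨h11, h22⟩

lemma lower_mul_lower (c c' : Matrix (Fin n) (Fin n) K) :
    (fromBlocks 0 0 c 0 : Matrix (Fin n ⊕ Fin n) (Fin n ⊕ Fin n) K) * fromBlocks 0 0 c' 0 = 0 := by
  rw [fromBlocks_multiply]
  simp [← fromBlocks_zero]

lemma upper_mul_upper (b b' : Matrix (Fin n) (Fin n) K) :
    (fromBlocks 0 b 0 0 : Matrix (Fin n ⊕ Fin n) (Fin n ⊕ Fin n) K) * fromBlocks 0 b' 0 0 = 0 := by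
  rw [fromBlocks_multiply]
  simp [← fromBlocks_zero]

lemma zero_mem_g1 :
    ((0 : Matrix (Fin n ⊕ Fin n) (Fin n ⊕ Fin n) K))ᵀ * (fromBlocks 0 1 1 0 : Matrix (Fin n ⊕ Fin n) (Fin n ⊕ Fin n) K)
        = -((fromBlocks 0 1 1 0 : Matrix (Fin n ⊕ Fin n) (Fin n ⊕ Fin n) K) * 0)
      ∧ (fromBlocks 1 0 0 (-1) : Matrix (Fin n ⊕ Fin n) (Fin n ⊕ Fin n) K) * 0
          * (fromBlocks 1 0 0 (-1) : Matrix (Fin n ⊕ Fin n) (Fin n ⊕ Fin n) K) = -(0 : Matrix (Fin n ⊕ Fin n) (Fin n ⊕ Fin n) K) := by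
  simp

end Blocks


section Assemble
variable (K : Type*) [Field K] (n : ℕ)

abbrev BigMat := Matrix (Fin n ⊕ Fin n) (Fin n ⊕ Fin n) K

abbrev Amb := BigMat K n × BigMat K n

/-- extract the pair of lower-left blocks -/
def piY : Amb K n →ₗ[K] Matrix (Fin n) (Fin n) K × Matrix (Fin n) (Fin n) K where
  toFun v := (toBlocks₂₁ v.1, toBlocks₂₁ v.2)
  map_add' a b := rfl
  map_smul' c a := rfl

/-- extract the pair of upper-right blocks -/
def piX : Amb K n →ₗ[K] Matrix (Fin n) (Fin n) K × Matrix (Fin n) (Fin n) K where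
  toFun v := (toBlocks₁₂ v.1, toBlocks₁₂ v.2)
  map_add' a b := rfl
  map_smul' c a := rfl

/-- entry functionals -/
def dUR1 (i j : Fin n) : Module.Dual K (Amb K n) where
  toFun v := v.1 (Sum.inl i) (Sum.inr j)
  map_add' a b := rfl
  map_smul' c a := rfl

def dUR2 (i j : Fin n) : Module.Dual K (Amb K n) where
  toFun v := v.2 (Sum.inl i) (Sum.inr j)
  map_add' a b := rfl
  map_smul' c a := rfl

def dLL1 (i j : Fin n) : Module.Dual K (Amb K n) where
  toFun v := v.1 (Sum.inr i) (Sum.inl j)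
  map_add' a b := rfl
  map_smul' c a := rfl

def dLL2 (i j : Fin n) : Module.Dual K (Amb K n) where
  toFun v := v.2 (Sum.inr i) (Sum.inl j)
  map_add' a b := rfl
  map_smul' c a := rfl

/-- the set with both upper-right blocks zero -/
def FUR : Set (Amb K n) :=
  ⋂ (p : Fin n × Fin n), ({v | dUR1 K n p.1 p.2 v = 0} ∩ {v | dUR2 K n p.1 p.2 v = 0})

def FLL : Set (Amb K n) :=
  ⋂ (p : Fin n × Fin n), ({v | dLL1 K n p.1 p.2 v = 0} ∩ {v | dLL2 K n p.1 p.2 v = 0})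

lemma FUR_closed : @IsClosed _ (zariskiTop K (Amb K n)) (FUR K n) := by
  letI := zariskiTop K (Amb K n)
  exact isClosed_iInter fun p => (zclosed_dual K _).inter (zclosed_dual K _)

lemma FLL_closed : @IsClosed _ (zariskiTop K (Amb K n)) (FLL K n) := by
  letI := zariskiTop K (Amb K n)
  exact isClosed_iInter fun p => (zclosed_dual K _).inter (zclosed_dual K _)

lemma mem_FUR_iff (v : Amb K n) :
    v ∈ FUR K n ↔ toBlocks₁₂ v.1 = 0 ∧ toBlocks₁₂ v.2 = 0 := by
  simp only [FUR, Set.mem_iInter, Set.mem_inter_iff, Set.mem_setOf_eq]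
  constructor
  · intro h
    constructor <;> ext i j
    · exact (h ⟨i, j⟩).1
    · exact (h ⟨i, j⟩).2
  · intro h p
    constructor
    · exact congrFun (congrFun h.1 p.1) p.2
    · exact congrFun (congrFun h.2 p.1) p.2

lemma mem_FLL_iff (v : Amb K n) :
    v ∈ FLL K n ↔ toBlocks₂₁ v.1 = 0 ∧ toBlocks₂₁ v.2 = 0 := by
  simp only [FLL, Set.mem_iInter, Set.mem_inter_iff, Set.mem_setOf_eq]
  constructor
  · intro h
    constructor <;> ext i j
    · exact (h ⟨i, j⟩).1
    · exact (h ⟨i, j⟩).2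
  · intro h p
    constructor
    · exact congrFun (congrFun h.1 p.1) p.2
    · exact congrFun (congrFun h.2 p.1) p.2

end Assemble


end CVaux

open Matrix in
/-- For the symmetric pair `(so_{2n}, gl_n)` with `n` odd, `n ≥ 3`, the commuting
variety `C(g₁)` is reducible; in fact it has at least three irreducible components.
Here `V = k^{2n} = V₊ ⊕ V₋` with both summands isotropic for the symmetric form with
Gram matrix `J = antidiag(I, I)`, `σ` is conjugation by `A = diag(I, -I)`, and `g₁` is
the `(-1)`-eigenspace of `σ` on `so(V) = {x : xᵀJ = -Jx}`. -/
theorem commuting_variety_so2n_gln_reducible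
    (K : Type*) [Field K] [IsAlgClosed K] [CharZero K] (n : ℕ)
    (hodd : Odd n) (hn : 3 ≤ n) :
    let J : Matrix (Fin n ⊕ Fin n) (Fin n ⊕ Fin n) K := Matrix.fromBlocks 0 1 1 0
    let A : Matrix (Fin n ⊕ Fin n) (Fin n ⊕ Fin n) K := Matrix.fromBlocks 1 0 0 (-1)
    let g1 : Set (Matrix (Fin n ⊕ Fin n) (Fin n ⊕ Fin n) K) :=
      {x | xᵀ * J = -(J * x) ∧ A * x * A = -x}
    let C : Set (Matrix (Fin n ⊕ Fin n) (Fin n ⊕ Fin n) K ×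
        Matrix (Fin n ⊕ Fin n) (Fin n ⊕ Fin n) K) :=
      {p | p.1 ∈ g1 ∧ p.2 ∈ g1 ∧ p.1 * p.2 = p.2 * p.1}
    ¬ zIrreducible K C ∧
      ∃ S₁ S₂ S₃ : Set (Matrix (Fin n ⊕ Fin n) (Fin n ⊕ Fin n) K ×
          Matrix (Fin n ⊕ Fin n) (Fin n ⊕ Fin n) K),
        S₁ ∈ zIrredComponentsIn K C ∧ S₂ ∈ zIrredComponentsIn K C ∧
        S₃ ∈ zIrredComponentsIn K C ∧ S₁ ≠ S₂ ∧ S₁ ≠ S₃ ∧ S₂ ≠ S₃ := by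
  classical
  intro J A g1 C
  have hodd' : n % 2 = 1 := Nat.odd_iff.1 hodd
  -- the witness pair and the left inverse ψ
  have hker : LinearMap.ker (CVaux.phi K n (CVaux.Yw K n, CVaux.Yw' K n)) = ⊥ := by
    rw [LinearMap.ker_eq_bot']
    rintro ⟨⟨U, hU⟩, ⟨V, hV⟩⟩ hw
    have hw' : U * CVaux.Yw' K n - V * CVaux.Yw K n = 0 := hw
    obtain ⟨hU0, hV0⟩ := CVaux.witness_inj hn hodd' U V hU hV (sub_eq_zero.1 hw')
    refine Prod.ext (Subtype.ext ?_) (Subtype.ext ?_) <;> simpa [hU0, hV0]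
  obtain ⟨ψ, hψ⟩ :=
    (CVaux.phi K n (CVaux.Yw K n, CVaux.Yw' K n)).exists_leftInverse_of_injective hker
  -- the three closed sets
  set P1 := CVaux.detPoly K n ψ (CVaux.piY K n) with hP1def
  set P2 := CVaux.detPoly K n ψ (CVaux.piX K n) with hP2def
  set F1 : Set (CVaux.Amb K n) :=
    {v | MvPolynomial.eval (fun f : Module.Dual K (CVaux.Amb K n) => f v) P1 = 0} ∩
    {v | MvPolynomial.eval (fun f : Module.Dual K (CVaux.Amb K n) => f v) P2 = 0} with hF1def
  set F2 := CVaux.FUR K n with hF2def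
  set F3 := CVaux.FLL K n with hF3def
  have hF1c : @IsClosed _ (zariskiTop K (CVaux.Amb K n)) F1 := by
    letI := zariskiTop K (CVaux.Amb K n)
    exact (CVaux.zclosed_eval K P1).inter (CVaux.zclosed_eval K P2)
  have hF2c := CVaux.FUR_closed K n
  have hF3c := CVaux.FLL_closed K n
  -- the three points
  set x1 : CVaux.Amb K n := (fromBlocks 0 (CVaux.Yw K n) (CVaux.Yw K n) 0, 0) with hx1def
  set x2 : CVaux.Amb K n :=
    (fromBlocks 0 0 (CVaux.Yw K n) 0, fromBlocks 0 0 (CVaux.Yw' K n) 0) with hx2def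
  set x3 : CVaux.Amb K n :=
    (fromBlocks 0 (CVaux.Yw K n) 0 0, fromBlocks 0 (CVaux.Yw' K n) 0 0) with hx3def
  have hYsk := CVaux.Yw_skew K n
  have hY'sk := CVaux.Yw'_skew K n
  have h0sk : (0 : Matrix (Fin n) (Fin n) K)ᵀ = -0 := by simp
  -- memberships in C
  have hx1C : x1 ∈ C := by
    refine ⟨CVaux.g1_mem_of _ _ hYsk hYsk, CVaux.zero_mem_g1, ?_⟩
    show x1.1 * 0 = 0 * x1.1
    simp
  have hx2C : x2 ∈ C := by
    refine ⟨CVaux.g1_mem_of _ _ h0sk hYsk, CVaux.g1_mem_of _ _ h0sk hY'sk, ?_⟩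
    show fromBlocks 0 0 (CVaux.Yw K n) 0 * fromBlocks 0 0 (CVaux.Yw' K n) 0
        = fromBlocks 0 0 (CVaux.Yw' K n) 0 * fromBlocks 0 0 (CVaux.Yw K n) 0
    rw [CVaux.lower_mul_lower, CVaux.lower_mul_lower]
  have hx3C : x3 ∈ C := by
    refine ⟨CVaux.g1_mem_of _ _ hYsk h0sk, CVaux.g1_mem_of _ _ hY'sk h0sk, ?_⟩
    show fromBlocks 0 (CVaux.Yw K n) 0 0 * fromBlocks 0 (CVaux.Yw' K n) 0 0
        = fromBlocks 0 (CVaux.Yw' K n) 0 0 * fromBlocks 0 (CVaux.Yw K n) 0 0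
    rw [CVaux.upper_mul_upper, CVaux.upper_mul_upper]
  -- non-memberships
  have hYne := CVaux.Yw_ne_zero K n (by omega)
  have hx1F2 : x1 ∉ F2 := by
    rw [hF2def, CVaux.mem_FUR_iff]
    intro h
    exact hYne (by simpa [hx1def, toBlocks_fromBlocks₁₂] using h.1)
  have hx1F3 : x1 ∉ F3 := by
    rw [hF3def, CVaux.mem_FLL_iff]
    intro h
    exact hYne (by simpa [hx1def, toBlocks_fromBlocks₂₁] using h.1)
  have hx2F3 : x2 ∉ F3 := by
    rw [hF3def, CVaux.mem_FLL_iff]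
    intro h
    exact hYne (by simpa [hx2def, toBlocks_fromBlocks₂₁] using h.1)
  have hx3F2 : x3 ∉ F2 := by
    rw [hF2def, CVaux.mem_FUR_iff]
    intro h
    exact hYne (by simpa [hx3def, toBlocks_fromBlocks₁₂] using h.1)
  have hx2F1 : x2 ∉ F1 := by
    rw [hF1def]
    rintro ⟨h1, -⟩
    rw [Set.mem_setOf_eq, hP1def, CVaux.detPoly_eval] at h1
    have hpi : CVaux.piY K n x2 = (CVaux.Yw K n, CVaux.Yw' K n) := by
      show (toBlocks₂₁ x2.1, toBlocks₂₁ x2.2) = _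
      simp [CVaux.piY, hx2def, toBlocks_fromBlocks₂₁]
    rw [hpi, hψ, LinearMap.det_id] at h1
    exact one_ne_zero h1
  have hx3F1 : x3 ∉ F1 := by
    rw [hF1def]
    rintro ⟨-, h2⟩
    rw [Set.mem_setOf_eq, hP2def, CVaux.detPoly_eval] at h2
    have hpi : CVaux.piX K n x3 = (CVaux.Yw K n, CVaux.Yw' K n) := by
      show (toBlocks₁₂ x3.1, toBlocks₁₂ x3.2) = _
      simp [CVaux.piX, hx3def, toBlocks_fromBlocks₁₂]
    rw [hpi, hψ, LinearMap.det_id] at h2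
    exact one_ne_zero h2
  -- the cover
  have hcov : C ⊆ F1 ∪ F2 ∪ F3 := by
    intro v hv
    obtain ⟨hveq1, hsb1, hsc1⟩ := CVaux.g1_blocks v.1 hv.1.1 hv.1.2
    obtain ⟨hveq2, hsb2, hsc2⟩ := CVaux.g1_blocks v.2 hv.2.1.1 hv.2.1.2
    have hcm : v.1 * v.2 = v.2 * v.1 := hv.2.2
    rw [hveq1, hveq2] at hcm
    obtain ⟨hc1, hc2⟩ := CVaux.commute_blocks _ _ _ _ hcm
    by_cases hB : toBlocks₁₂ v.1 = 0 ∧ toBlocks₁₂ v.2 = 0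
    · exact Or.inl (Or.inr ((CVaux.mem_FUR_iff K n v).2 hB))
    by_cases hCc : toBlocks₂₁ v.1 = 0 ∧ toBlocks₂₁ v.2 = 0
    · exact Or.inr ((CVaux.mem_FLL_iff K n v).2 hCc)
    refine Or.inl (Or.inl ⟨?_, ?_⟩)
    · show MvPolynomial.eval (fun f : Module.Dual K (CVaux.Amb K n) => f v) P1 = 0
      rw [hP1def, CVaux.detPoly_eval]
      refine CVaux.det_zero_of_ker K n ψ _ ((⟨_, hsb1⟩, ⟨_, hsb2⟩) :
        CVaux.Wsp K n) ?_ ?_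
      · intro h0
        apply hB
        have h1 := congrArg (fun w : CVaux.Wsp K n => (w.1 : Matrix (Fin n) (Fin n) K)) h0
        have h2 := congrArg (fun w : CVaux.Wsp K n => (w.2 : Matrix (Fin n) (Fin n) K)) h0
        exact ⟨h1, h2⟩
      · show toBlocks₁₂ v.1 * (CVaux.piY K n v).2 - toBlocks₁₂ v.2 * (CVaux.piY K n v).1 = 0
        have : CVaux.piY K n v = (toBlocks₂₁ v.1, toBlocks₂₁ v.2) := rfl
        rw [this]
        exact sub_eq_zero.2 hc1
    · show MvPolynomial.eval (fun f : Module.Dual K (CVaux.Amb K n) => f v) P2 = 0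
      rw [hP2def, CVaux.detPoly_eval]
      refine CVaux.det_zero_of_ker K n ψ _ ((⟨_, hsc1⟩, ⟨_, hsc2⟩) :
        CVaux.Wsp K n) ?_ ?_
      · intro h0
        apply hCc
        have h1 := congrArg (fun w : CVaux.Wsp K n => (w.1 : Matrix (Fin n) (Fin n) K)) h0
        have h2 := congrArg (fun w : CVaux.Wsp K n => (w.2 : Matrix (Fin n) (Fin n) K)) h0
        exact ⟨h1, h2⟩
      · show toBlocks₂₁ v.1 * (CVaux.piX K n v).2 - toBlocks₂₁ v.2 * (CVaux.piX K n v).1 = 0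
        have : CVaux.piX K n v = (toBlocks₁₂ v.1, toBlocks₁₂ v.2) := rfl
        rw [this]
        exact sub_eq_zero.2 hc2
  -- components through the three points
  obtain ⟨S₁, hS₁, hx1S⟩ := CVaux.exists_zcomponent K hx1C
  obtain ⟨S₂, hS₂, hx2S⟩ := CVaux.exists_zcomponent K hx2C
  obtain ⟨S₃, hS₃, hx3S⟩ := CVaux.exists_zcomponent K hx3C
  have hsub : ∀ S, S ∈ zIrredComponentsIn K C → S ⊆ F1 ∨ S ⊆ F2 ∨ S ⊆ F3 := fun S hS =>
    CVaux.zirr_subset_of_cover K hS.2.1 hF1c hF2c hF3c (hS.1.trans hcov)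
  have hS₁F : S₁ ⊆ F1 := by
    rcases hsub S₁ hS₁ with h | h | h
    · exact h
    · exact absurd (h hx1S) hx1F2
    · exact absurd (h hx1S) hx1F3
  have hS₂F : S₂ ⊆ F2 := by
    rcases hsub S₂ hS₂ with h | h | h
    · exact absurd (h hx2S) hx2F1
    · exact h
    · exact absurd (h hx2S) hx2F3
  have hS₃F : S₃ ⊆ F3 := by
    rcases hsub S₃ hS₃ with h | h | h
    · exact absurd (h hx3S) hx3F1
    · exact absurd (h hx3S) hx3F2
    · exact h
  refine ⟨?_, S₁, S₂, S₃, hS₁, hS₂, hS₃, ?_, ?_, ?_⟩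
  · intro hirr
    rcases CVaux.zirr_subset_of_cover K hirr hF1c hF2c hF3c hcov with h | h | h
    · exact hx2F1 (h hx2C)
    · exact hx1F2 (h hx1C)
    · exact hx1F3 (h hx1C)
  · intro he
    exact hx2F1 (hS₁F (he ▸ hx2S))
  · intro he
    exact hx3F1 (hS₁F (he ▸ hx3S))
  · intro he
    exact hx3F2 (hS₂F (he ▸ hx3S))
end

section
/- Let (g, g_0) = (gl_{n+m}, gl_n ⊕ gl_m) with n < m, and let c = {X + X^t : X an m×n matrix with x_{ij} = 0 for i ≠ j} ⊂ g_1 be the Cartan subspace of 'diagonal' matrices. For ξ = X + Y and η = Z + U in g_1 (with X, Z ∈ Hom(V_a, V_b) viewed as m×n matrices and Y, U ∈ Hom(V_b, V_a)), let D_1(ξ, η) = (X|Z) be the m×2n matrix obtained by concatenating X and Z. Then for every pair (t, h) in C_0, the Zariski closure of G_0·(c × c), one has rank D_1(t, h) ≤ n. -/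
open Matrix

section Minors
variable {K : Type*} [Field K]

lemma exists_comp_linearIndependent {W : Type*} [AddCommGroup W] [Module K W]
    {ι : Type*} [Fintype ι] (v : ι → W) (r : ℕ)
    (hr : r ≤ Module.finrank K (Submodule.span K (Set.range v))) :
    ∃ g : Fin r → ι, LinearIndependent K (v ∘ g) := by
  classical
  obtain ⟨b, hbsub, hbspan, hbli⟩ := exists_linearIndependent K (Set.range v)
  have hbfin : b.Finite := (Set.finite_range v).subset hbsub
  haveI := hbfin.fintype
  have hcard : Module.finrank K (Submodule.span K b) = b.toFinset.card :=
    finrank_span_set_eq_card hbli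
  have hr' : r ≤ Fintype.card b := by
    rw [Set.toFinset_card] at hcard
    rw [← hbspan] at hr
    omega
  let e : Fin r ↪ b := (Fin.castLEEmb hr').trans (Fintype.equivFin b).symm.toEmbedding
  choose g hg using fun j : Fin r => hbsub (e j).2
  refine ⟨g, ?_⟩
  have hvg : v ∘ g = (fun x : b => (x : W)) ∘ e := by
    funext j; simp [Function.comp, hg j]
  rw [hvg]
  exact hbli.comp e e.injective

lemma det_thin_mul {r s : ℕ} (hs : s < r)
    (A : Matrix (Fin r) (Fin s) K) (B : Matrix (Fin s) (Fin r) K) : (A * B).det = 0 := by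
  rw [← Matrix.exists_mulVec_eq_zero_iff]
  have hinj : ¬ Function.Injective B.mulVecLin := by
    intro h
    have := LinearMap.finrank_le_finrank_of_injective h
    simp [Module.finrank_fin_fun] at this
    omega
  rw [← LinearMap.ker_eq_bot] at hinj
  obtain ⟨w, hw, hw0⟩ := Submodule.exists_mem_ne_zero_of_ne_bot hinj
  refine ⟨w, hw0, ?_⟩
  rw [← Matrix.mulVec_mulVec]
  have : B.mulVec w = 0 := hw
  rw [this, Matrix.mulVec_zero]

lemma rank_le_of_minors {ι κ : Type*} [Fintype ι] [Fintype κ]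
    [DecidableEq ι] [DecidableEq κ] (M : Matrix ι κ K) (r : ℕ)
    (h : ∀ (f : Fin (r + 1) → ι) (g : Fin (r + 1) → κ), (M.submatrix f g).det = 0) :
    M.rank ≤ r := by
  by_contra hc
  push_neg at hc
  obtain ⟨g, hg⟩ := exists_comp_linearIndependent (K := K) Mᵀ (r + 1) (by
    rw [show Set.range Mᵀ = Set.range M.col from rfl, ← Matrix.rank_eq_finrank_span_cols]; omega)
  set N : Matrix ι (Fin (r + 1)) K := M.submatrix id g with hN
  have hNt : LinearIndependent K (fun j => Nᵀ j) := by
    have h2 : (fun j => Nᵀ j) = Mᵀ ∘ g := by funext j; ext i; rfl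
    rw [h2]; exact hg
  have hrN : N.rank = r + 1 := by
    have h1 : Nᵀ.rank = Fintype.card (Fin (r + 1)) := hNt.rank_matrix
    rw [Matrix.rank_transpose, Fintype.card_fin] at h1
    exact h1
  obtain ⟨f, hf⟩ := exists_comp_linearIndependent (K := K) N (r + 1) (by
    rw [show Set.range N = Set.range N.row from rfl, ← Matrix.rank_eq_finrank_span_row, hrN])
  have hrows : LinearIndependent K (fun i => (M.submatrix f g) i) := by
    have h2 : (fun i => (M.submatrix f g) i) = N ∘ f := by funext i; ext j; rfl
    rw [h2]; exact hf
  have hu : IsUnit (M.submatrix f g) := Matrix.linearIndependent_rows_iff_isUnit.mp hrows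
  have hd := (Matrix.isUnit_iff_isUnit_det _).mp hu
  rw [h f g] at hd
  exact hd.ne_zero rfl

end Minors

section Zar
variable {K V : Type*} [Field K] [AddCommGroup V] [Module K V]

lemma isClosed_eval_zero (P : MvPolynomial (Module.Dual K V) K) :
    @IsClosed V (zariskiTop K V)
      {v | MvPolynomial.eval (fun f : Module.Dual K V => f v) P = 0} := by
  have hset : {v : V | MvPolynomial.eval (fun f : Module.Dual K V => f v) P = 0}
      = (fun v : V => (⟨RingHom.ker (MvPolynomial.eval (fun f : Module.Dual K V => f v)),
          RingHom.ker_isPrime _⟩ : PrimeSpectrum (MvPolynomial (Module.Dual K V) K)))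
        ⁻¹' (PrimeSpectrum.zeroLocus {P}) := by
    ext v
    simp [PrimeSpectrum.mem_zeroLocus, Set.singleton_subset_iff, RingHom.mem_ker]
  rw [hset]
  letI : TopologicalSpace V := zariskiTop K V
  exact (PrimeSpectrum.isClosed_zeroLocus _).preimage continuous_induced_dom

noncomputable def minorPoly {ι κ : Type*} (r : ℕ) (φ : ι → κ → Module.Dual K V)
    (f : Fin r → ι) (g : Fin r → κ) : MvPolynomial (Module.Dual K V) K :=
  (Matrix.of fun a b => MvPolynomial.X (φ (f a) (g b))).det

lemma eval_minorPoly {ι κ : Type*} (r : ℕ) (φ : ι → κ → Module.Dual K V)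
    (f : Fin r → ι) (g : Fin r → κ) (v : V) :
    MvPolynomial.eval (fun ℓ : Module.Dual K V => ℓ v) (minorPoly r φ f g)
      = (Matrix.of fun a b => φ (f a) (g b) v).det := by
  rw [minorPoly, RingHom.map_det]
  congr 1
  ext a b
  simp [Matrix.map_apply]

lemma rank_le_of_mem_zClosure {ι κ : Type*} [Fintype ι] [Fintype κ]
    [DecidableEq ι] [DecidableEq κ]
    (φ : ι → κ → Module.Dual K V) (r : ℕ) (S : Set V)
    (hS : ∀ v ∈ S, ∀ (f : Fin (r + 1) → ι) (g : Fin (r + 1) → κ),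
      (Matrix.of fun a b => φ (f a) (g b) v).det = 0)
    {v : V} (hv : v ∈ zClosure K S) :
    (Matrix.of fun i j => φ i j v).rank ≤ r := by
  letI : TopologicalSpace V := zariskiTop K V
  apply rank_le_of_minors
  intro f g
  have hT : IsClosed (⋂ (f : Fin (r + 1) → ι) (g : Fin (r + 1) → κ),
      {w : V | MvPolynomial.eval (fun ℓ : Module.Dual K V => ℓ w)
        (minorPoly (r + 1) φ f g) = 0}) :=
    isClosed_iInter fun f => isClosed_iInter fun g => isClosed_eval_zero _
  have hsub : S ⊆ ⋂ (f : Fin (r + 1) → ι) (g : Fin (r + 1) → κ),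
      {w : V | MvPolynomial.eval (fun ℓ : Module.Dual K V => ℓ w)
        (minorPoly (r + 1) φ f g) = 0} := by
    intro w hw
    refine Set.mem_iInter.2 fun f => Set.mem_iInter.2 fun g => ?_
    rw [Set.mem_setOf_eq, eval_minorPoly]
    exact hS w hw f g
  have hmem := closure_minimal hsub hT hv
  have h := Set.mem_iInter.1 (Set.mem_iInter.1 hmem f) g
  rw [Set.mem_setOf_eq, eval_minorPoly] at h
  exact h

end Zar


open Matrix

section MainAux
variable {K : Type*} [Field K]

noncomputable def entryDual (K : Type*) [Field K] (n m : ℕ) (i : Fin m) (j : Fin n ⊕ Fin n) :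
    Module.Dual K (Matrix (Fin n ⊕ Fin m) (Fin n ⊕ Fin m) K ×
      Matrix (Fin n ⊕ Fin m) (Fin n ⊕ Fin m) K) where
  toFun p := Sum.elim (fun j' : Fin n => p.1 (Sum.inr i) (Sum.inl j'))
      (fun j' : Fin n => p.2 (Sum.inr i) (Sum.inl j')) j
  map_add' p q := by cases j <;> simp
  map_smul' a p := by cases j <;> simp

lemma diagonalish_factor {n m : ℕ} (hnm : n ≤ m)
    (M M' : Matrix (Fin m) (Fin n) K)
    (hM : ∀ (i : Fin m) (j : Fin n), n ≤ (i : ℕ) → M i j = 0) (hM' : ∀ (i : Fin m) (j : Fin n), n ≤ (i : ℕ) → M' i j = 0) :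
    (Matrix.of fun (i : Fin m) => Sum.elim (fun j => M i j) (fun j => M' i j))
      = (Matrix.of fun (i : Fin m) (j : Fin n) => if (i : ℕ) = (j : ℕ) then (1 : K) else 0) *
        (Matrix.of fun (i : Fin n) => Sum.elim (fun j => M (Fin.castLE hnm i) j)
          (fun j => M' (Fin.castLE hnm i) j)) := by
  have key : ∀ (N : Matrix (Fin m) (Fin n) K), (∀ (i : Fin m) (j : Fin n), n ≤ (i : ℕ) → N i j = 0) →
      ∀ (i : Fin m) (j0 : Fin n), N i j0 =
        ∑ k : Fin n, (if (i : ℕ) = (k : ℕ) then (1 : K) else 0) * N (Fin.castLE hnm k) j0 := by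
    intro N hN i j0
    rcases lt_or_ge (i : ℕ) n with hi | hi
    · rw [Finset.sum_eq_single (⟨(i : ℕ), hi⟩ : Fin n)]
      · have hc : Fin.castLE hnm (⟨(i : ℕ), hi⟩ : Fin n) = i := by
          apply Fin.ext; rfl
        rw [hc, if_pos rfl, one_mul]
      · intro k _ hk
        rw [if_neg, zero_mul]
        intro hik
        exact hk (Fin.ext hik.symm)
      · intro hmem
        exact absurd (Finset.mem_univ _) hmem
    · rw [hN i j0 hi]
      symm
      apply Finset.sum_eq_zero
      intro k _
      rw [if_neg, zero_mul]
      intro hik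
      have := k.isLt
      omega
  ext i j
  rw [Matrix.mul_apply]
  rcases j with j | j
  · simpa using key M hM i j
  · simpa using key M' hM' i j

end MainAux

open Matrix in
/-- For `(gl_{n+m}, gl_n ⊕ gl_m)` with `n < m`, let `c ⊆ g₁` be the Cartan subspace of
`diagonal` matrices `X + Xᵀ` (an `m×n` block `X` with `x_{ij} = 0` for `i ≠ j` placed in
`Hom(V_a, V_b)` together with its transpose in `Hom(V_b, V_a)`), and for
`ξ = X + Y, η = Z + U ∈ g₁` let `D₁(ξ, η) = (X|Z)` be the `m × 2n` concatenation of the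
`Hom(V_a, V_b)`-blocks.  Then every `(t, h)` in `C₀`, the Zariski closure of
`G₀ • (c × c)` (where `G₀ = GL_n × GL_m` is the group of invertible matrices commuting
with `A = diag(-Iₙ, Iₘ)`, acting by conjugation), satisfies `rank D₁(t, h) ≤ n`. -/
theorem rank_bound_on_C0_gl
    (K : Type*) [Field K] [IsAlgClosed K] [CharZero K] (n m : ℕ) (hnm : n < m) :
    let A : Matrix (Fin n ⊕ Fin m) (Fin n ⊕ Fin m) K := Matrix.fromBlocks (-1) 0 0 1
    let c : Set (Matrix (Fin n ⊕ Fin m) (Fin n ⊕ Fin m) K) :=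
      {ξ | ∃ X : Matrix (Fin m) (Fin n) K,
        (∀ (i : Fin m) (j : Fin n), (i : ℕ) ≠ (j : ℕ) → X i j = 0) ∧ ξ = Matrix.fromBlocks 0 Xᵀ X 0}
    let C₀ : Set (Matrix (Fin n ⊕ Fin m) (Fin n ⊕ Fin m) K ×
        Matrix (Fin n ⊕ Fin m) (Fin n ⊕ Fin m) K) :=
      zClosure K {p | ∃ g : Matrix (Fin n ⊕ Fin m) (Fin n ⊕ Fin m) K, IsUnit g ∧
        g * A = A * g ∧ ∃ x ∈ c, ∃ y ∈ c, p = (g * x * g⁻¹, g * y * g⁻¹)}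
    ∀ p ∈ C₀,
      (Matrix.of fun (i : Fin m) =>
        Sum.elim (fun j : Fin n => p.1 (Sum.inr i) (Sum.inl j))
          (fun j : Fin n => p.2 (Sum.inr i) (Sum.inl j))).rank ≤ n := by
  classical
  intro A c C₀ p hp
  refine rank_le_of_mem_zClosure (entryDual K n m) n _ ?_ hp
  rintro q ⟨u, huU, huA, x, hx, y, hy, rfl⟩ f g'
  obtain ⟨X, hX, rfl⟩ := hx
  obtain ⟨Z, hZ, rfl⟩ := hy
  obtain ⟨B, E, F, C, rfl⟩ : ∃ B E F C, u = fromBlocks B E F C :=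
    ⟨_, _, _, _, (fromBlocks_toBlocks u).symm⟩
  have huA' : fromBlocks B E F C * fromBlocks (-1) 0 0 1
      = fromBlocks (-1) 0 0 1 * (fromBlocks B E F C) := huA
  rw [fromBlocks_multiply, fromBlocks_multiply] at huA'
  simp only [Matrix.mul_one, Matrix.mul_zero, Matrix.zero_mul, Matrix.mul_neg, Matrix.neg_mul,
    Matrix.one_mul, add_zero, zero_add, mul_one, neg_zero] at huA'
  have hE : E = 0 := by
    have h12 := congrArg Matrix.toBlocks₁₂ huA'
    simp only [Matrix.toBlocks_fromBlocks₁₂] at h12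
    ext i j
    have h := congrFun (congrFun h12 i) j
    simp only [Matrix.neg_apply, Matrix.zero_apply] at h ⊢
    have h2 : (2 : K) * E i j = 0 := by linear_combination h
    rcases mul_eq_zero.mp h2 with h3 | h3
    · exact absurd h3 two_ne_zero
    · exact h3
  have hF : F = 0 := by
    have h21 := congrArg Matrix.toBlocks₂₁ huA'
    simp only [Matrix.toBlocks_fromBlocks₂₁] at h21
    ext i j
    have h := congrFun (congrFun h21 i) j
    simp only [Matrix.neg_apply, Matrix.zero_apply] at h ⊢
    have h2 : (2 : K) * F i j = 0 := by linear_combination -h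
    rcases mul_eq_zero.mp h2 with h3 | h3
    · exact absurd h3 two_ne_zero
    · exact h3
  subst hE hF
  have hudet := (Matrix.isUnit_iff_isUnit_det _).mp huU
  rw [Matrix.det_fromBlocks_zero₂₁] at hudet
  have hB : IsUnit B.det := isUnit_of_mul_isUnit_left hudet
  have hC : IsUnit C.det := isUnit_of_mul_isUnit_right hudet
  have hginv : (fromBlocks B 0 0 C : Matrix (Fin n ⊕ Fin m) (Fin n ⊕ Fin m) K)⁻¹
      = fromBlocks B⁻¹ 0 0 C⁻¹ := by
    apply Matrix.inv_eq_right_inv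
    rw [fromBlocks_multiply]
    simp [Matrix.mul_nonsing_inv _ hB, Matrix.mul_nonsing_inv _ hC]
  have hx1 : fromBlocks B 0 0 C * fromBlocks 0 Xᵀ X 0 * (fromBlocks B 0 0 C)⁻¹
      = fromBlocks 0 (B * (Xᵀ * C⁻¹)) (C * (X * B⁻¹)) 0 := by
    rw [hginv, fromBlocks_multiply, fromBlocks_multiply]
    simp [Matrix.mul_assoc]
  have hy1 : fromBlocks B 0 0 C * fromBlocks 0 Zᵀ Z 0 * (fromBlocks B 0 0 C)⁻¹
      = fromBlocks 0 (B * (Zᵀ * C⁻¹)) (C * (Z * B⁻¹)) 0 := by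
    rw [hginv, fromBlocks_multiply, fromBlocks_multiply]
    simp [Matrix.mul_assoc]
  have hXrow : ∀ (i : Fin m) (j : Fin n), n ≤ (i : ℕ) → (X * B⁻¹) i j = 0 := by
    intro i j hi
    rw [Matrix.mul_apply]
    apply Finset.sum_eq_zero
    intro k _
    rw [hX i k (by have := k.isLt; omega), zero_mul]
  have hZrow : ∀ (i : Fin m) (j : Fin n), n ≤ (i : ℕ) → (Z * B⁻¹) i j = 0 := by
    intro i j hi
    rw [Matrix.mul_apply]
    apply Finset.sum_eq_zero
    intro k _
    rw [hZ i k (by have := k.isLt; omega), zero_mul]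
  have hW := diagonalish_factor (le_of_lt hnm) (X * B⁻¹) (Z * B⁻¹) hXrow hZrow
  set P0 : Matrix (Fin m) (Fin n) K :=
    Matrix.of fun (i : Fin m) (j : Fin n) => if (i : ℕ) = (j : ℕ) then (1 : K) else 0 with hP0
  set Qm : Matrix (Fin n) (Fin n ⊕ Fin n) K :=
    Matrix.of fun (i : Fin n) => Sum.elim (fun j => (X * B⁻¹) (Fin.castLE (le_of_lt hnm) i) j)
      (fun j => (Z * B⁻¹) (Fin.castLE (le_of_lt hnm) i) j) with hQm
  set D : Matrix (Fin m) (Fin n ⊕ Fin n) K :=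
    Matrix.of fun i => Sum.elim (fun j => (C * (X * B⁻¹)) i j)
      (fun j => (C * (Z * B⁻¹)) i j) with hD
  have hentry : (Matrix.of fun (a b : Fin (n + 1)) =>
      entryDual K n m (f a) (g' b)
        ((fromBlocks B 0 0 C * fromBlocks 0 Xᵀ X 0 * (fromBlocks B 0 0 C)⁻¹,
          fromBlocks B 0 0 C * fromBlocks 0 Zᵀ Z 0 * (fromBlocks B 0 0 C)⁻¹)))
      = D.submatrix f g' := by
    ext a b
    show Sum.elim _ _ (g' b) = D (f a) (g' b)
    rcases g' b with j | j
    · show (fromBlocks B 0 0 C * fromBlocks 0 Xᵀ X 0 * (fromBlocks B 0 0 C)⁻¹)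
        (Sum.inr (f a)) (Sum.inl j) = _
      rw [hx1]
      rfl
    · show (fromBlocks B 0 0 C * fromBlocks 0 Zᵀ Z 0 * (fromBlocks B 0 0 C)⁻¹)
        (Sum.inr (f a)) (Sum.inl j) = _
      rw [hy1]
      rfl
  have hDfactor : D = (C * P0) * Qm := by
    rw [Matrix.mul_assoc, ← hW]
    ext i j
    rcases j with j | j <;> rfl
  show (Matrix.of fun (a b : Fin (n + 1)) => _).det = 0
  rw [hentry, hDfactor, Matrix.submatrix_mul _ _ _ id _ Function.bijective_id]
  exact det_thin_mul (Nat.lt_succ_self n) _ _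
end

section
/- Let (g, g_0) = (so_{2n}, gl_n) with n = 2k+1 odd, and let c ⊂ g_1 be the Cartan subspace of matrices with equal skew-symmetric anti-diagonal blocks, c = {antidiag(X, X) : X = (x_{ij}) an n×n matrix with x_{ij} = 0 unless i = n+1−j, X = −X^t}. For ξ = antidiag(X, Y), η = antidiag(Z, U) ∈ g_1, let D_1(ξ, η) = (X|Z) be the n×2n concatenation of the upper-right blocks. Then for every pair (t, h) in C_0, the Zariski closure of G_0·(c × c), one has rank D_1(t, h) < n. -/
lemma eval_zero_on_zClosure {K V : Type*} [Field K] [AddCommGroup V] [Module K V]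
    (S : Set V) {ι : Type*} (q : ι → MvPolynomial (Module.Dual K V) K)
    (hS : ∀ v ∈ S, ∀ i, MvPolynomial.eval (fun f : Module.Dual K V => f v) (q i) = 0) :
    ∀ v ∈ zClosure K S, ∀ i, MvPolynomial.eval (fun f : Module.Dual K V => f v) (q i) = 0 := by
  letI := zariskiTop K V
  set φ : V → PrimeSpectrum (MvPolynomial (Module.Dual K V) K) :=
    fun v => ⟨RingHom.ker (MvPolynomial.eval (fun f : Module.Dual K V => f v)),
      RingHom.ker_isPrime _⟩
  set T : Set V := {v | ∀ i, MvPolynomial.eval (fun f : Module.Dual K V => f v) (q i) = 0}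
  have hT : T = φ ⁻¹' (PrimeSpectrum.zeroLocus (Set.range q)) := by
    ext v
    simp only [Set.mem_setOf_eq, Set.mem_preimage, PrimeSpectrum.mem_zeroLocus, T, φ]
    constructor
    · rintro h _ ⟨i, rfl⟩
      exact h i
    · intro h i
      exact h ⟨i, rfl⟩
  have hclosed : IsClosed T := by
    rw [hT]
    exact (PrimeSpectrum.isClosed_zeroLocus _).preimage continuous_induced_dom
  intro v hv
  exact closure_minimal (fun w hw => hS w hw) hclosed hv

open Matrix in
lemma aux_det_zero_of_rank_lt {K : Type*} [Field K] {n : ℕ}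
    (M : Matrix (Fin n) (Fin n ⊕ Fin n) K)
    (h : M.rank < n) (s : Fin n → Fin n ⊕ Fin n) : (M.submatrix id s).det = 0 := by
  by_contra hdet
  have hunit : IsUnit (M.submatrix id s) := (isUnit_iff_isUnit_det _).2 (isUnit_iff_ne_zero.2 hdet)
  have hr : (M.submatrix id s).rank = n := by
    simpa using rank_of_isUnit _ hunit
  have heq : M.submatrix id s
      = M * (1 : Matrix (Fin n ⊕ Fin n) (Fin n ⊕ Fin n) K).submatrix id s := by
    ext i j
    simp [Matrix.mul_apply, Matrix.one_apply]
  have hle : (M.submatrix id s).rank ≤ M.rank := by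
    rw [heq]; exact rank_mul_le_left _ _
  omega

open Matrix in
lemma aux_rank_lt_of_dets {K : Type*} [Field K] {n : ℕ}
    (M : Matrix (Fin n) (Fin n ⊕ Fin n) K)
    (h : ∀ s : Fin n → Fin n ⊕ Fin n, (M.submatrix id s).det = 0) : M.rank < n := by
  by_contra hlt
  have hle : M.rank ≤ n := by simpa using M.rank_le_card_height
  have hrank : M.rank = n := le_antisymm hle (not_lt.1 hlt)
  have hspan : Submodule.span K (Set.range Mᵀ) = ⊤ := by
    apply Submodule.eq_top_of_finrank_eq
    rw [show Set.range Mᵀ = Set.range M.col from rfl, ← rank_eq_finrank_span_cols, hrank]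
    simp
  obtain ⟨b, hbsub, hbspan, hbind⟩ := exists_linearIndependent K (Set.range Mᵀ)
  rw [hspan] at hbspan
  have hbfin : b.Finite := hbind.setFinite
  haveI : Fintype b := hbfin.fintype
  have hbbasis : Module.Basis b K (Fin n → K) :=
    Module.Basis.mk hbind (by rw [Subtype.range_coe_subtype, Set.setOf_mem_eq, hbspan])
  have hcard : Fintype.card b = n := by
    have := Module.finrank_eq_card_basis hbbasis
    simpa using this.symm
  have e : Fin n ≃ b := (Fintype.equivFinOfCardEq hcard).symm
  choose f hf using fun x : b => (hbsub x.2)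
  set s : Fin n → Fin n ⊕ Fin n := fun i => f (e i)
  have hcols : (M.submatrix id s)ᵀ = fun j => (e j : Fin n → K) := by
    funext j
    exact hf (e j)
  have hind : LinearIndependent K (M.submatrix id s)ᵀ := by
    rw [hcols]
    exact hbind.comp e e.injective
  have hr : (M.submatrix id s)ᵀ.rank = n := by
    exact hind.rank_matrix.trans (Fintype.card_fin n)
  have hdet := h s
  obtain ⟨v, hv0, hvm⟩ := (exists_mulVec_eq_zero_iff).2 hdet
  have := Fintype.linearIndependent_iff.1 hind v ?_
  · exact hv0 (funext this)
  · funext i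
    have : (M.submatrix id s *ᵥ v) i = 0 := by rw [hvm]; rfl
    simpa [Matrix.mulVec, dotProduct, mul_comm] using this

open Matrix in
lemma aux_rank_lt_of_row_zero {K : Type*} [Field K] {n : ℕ}
    (M : Matrix (Fin n) (Fin n ⊕ Fin n) K) (i₀ : Fin n)
    (h : ∀ j, M i₀ j = 0) : M.rank < n := by
  classical
  set π : (Fin n → K) →ₗ[K] K := LinearMap.proj i₀
  have hker : LinearMap.range M.mulVecLin ≤ LinearMap.ker π := by
    rintro w ⟨v, rfl⟩
    simp only [LinearMap.mem_ker, π, LinearMap.proj_apply]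
    show (M *ᵥ v) i₀ = 0
    simp [Matrix.mulVec, dotProduct, h]
  have hπ : LinearMap.ker π ≠ ⊤ := by
    intro htop
    have : π (Pi.single i₀ 1) = 0 := by
      rw [← LinearMap.mem_ker, htop]; trivial
    simp [π] at this
  have hlt : LinearMap.ker π < ⊤ := lt_of_le_of_ne le_top hπ
  have h1 : Module.finrank K (LinearMap.ker π) < n := by
    have := Submodule.finrank_lt (K := K) (V := Fin n → K) hπ
    simpa using this
  exact lt_of_le_of_lt (Submodule.finrank_mono hker) h1

open Matrix in
lemma aux_blocks {K : Type*} [Field K] [CharZero K] {n : ℕ}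
    (g : Matrix (Fin n ⊕ Fin n) (Fin n ⊕ Fin n) K)
    (hA : g * (fromBlocks 1 0 0 (-1)) = (fromBlocks 1 0 0 (-1)) * g)
    (hJ : gᵀ * (fromBlocks 0 1 1 0) * g = fromBlocks 0 1 1 0) :
    g = fromBlocks g.toBlocks₁₁ 0 0 g.toBlocks₂₂ ∧
    g.toBlocks₁₁ᵀ * g.toBlocks₂₂ = 1 ∧ g.toBlocks₂₂ᵀ * g.toBlocks₁₁ = 1 := by
  set B₁ := g.toBlocks₁₁
  set B₂ := g.toBlocks₁₂
  set B₃ := g.toBlocks₂₁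
  set B₄ := g.toBlocks₂₂
  have hg : g = fromBlocks B₁ B₂ B₃ B₄ := (fromBlocks_toBlocks g).symm
  rw [hg] at hA hJ
  rw [Matrix.fromBlocks_multiply, Matrix.fromBlocks_multiply] at hA
  simp only [Matrix.mul_one, Matrix.mul_zero, Matrix.zero_mul, Matrix.one_mul,
    Matrix.mul_neg, Matrix.neg_mul, add_zero, zero_add, Matrix.fromBlocks_inj] at hA
  obtain ⟨-, h12, h21, -⟩ := hA
  have hB2 : B₂ = 0 := by
    ext i j
    have h := congrFun (congrFun h12 i) j
    simp only [Matrix.neg_apply] at h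
    have : B₂ i j = 0 := by linear_combination (-1/2 : K) * h
    simpa using this
  have hB3 : B₃ = 0 := by
    ext i j
    have h := congrFun (congrFun h21 i) j
    simp only [Matrix.neg_apply] at h
    have : B₃ i j = 0 := by linear_combination (1/2 : K) * h
    simpa using this
  rw [hB2, hB3] at hg hJ
  rw [Matrix.fromBlocks_transpose, Matrix.fromBlocks_multiply, Matrix.fromBlocks_multiply] at hJ
  simp only [Matrix.mul_one, Matrix.mul_zero, Matrix.zero_mul, Matrix.one_mul,
    Matrix.transpose_zero, add_zero, zero_add, Matrix.fromBlocks_inj] at hJ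
  obtain ⟨-, hh1, hh2, -⟩ := hJ
  exact ⟨hg, hh1, hh2⟩

open Matrix in
lemma aux_conj {K : Type*} [Field K] {n : ℕ}
    (B₁ B₄ X : Matrix (Fin n) (Fin n) K) (h1 : B₁ᵀ * B₄ = 1) (h4 : B₄ᵀ * B₁ = 1) :
    (fromBlocks B₁ 0 0 B₄ : Matrix (Fin n ⊕ Fin n) (Fin n ⊕ Fin n) K) *
      fromBlocks 0 X X 0 * (fromBlocks B₁ 0 0 B₄)⁻¹ =
    fromBlocks 0 (B₁ * X * B₁ᵀ) (B₄ * X * B₄ᵀ) 0 := by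
  have hB1 : B₁ * B₄ᵀ = 1 := mul_eq_one_comm.mp h4
  have hB4 : B₄ * B₁ᵀ = 1 := mul_eq_one_comm.mp h1
  have hinv : (fromBlocks B₁ 0 0 B₄ : Matrix (Fin n ⊕ Fin n) (Fin n ⊕ Fin n) K)⁻¹ =
      fromBlocks B₄ᵀ 0 0 B₁ᵀ := by
    apply Matrix.inv_eq_right_inv
    simp [Matrix.fromBlocks_multiply, hB1, hB4, ← Matrix.fromBlocks_one]
  rw [hinv]
  simp [Matrix.fromBlocks_multiply, Matrix.mul_assoc]

/-- the entry functional on a pair of matrices -/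
noncomputable def coordDual (K : Type*) [Field K] (n : ℕ) (i : Fin n) (j : Fin n ⊕ Fin n) :
    Module.Dual K (Matrix (Fin n ⊕ Fin n) (Fin n ⊕ Fin n) K ×
      Matrix (Fin n ⊕ Fin n) (Fin n ⊕ Fin n) K) where
  toFun p := Sum.elim (fun j' : Fin n => p.1 (Sum.inl i) (Sum.inr j'))
    (fun j' : Fin n => p.2 (Sum.inl i) (Sum.inr j')) j
  map_add' p q := by cases j <;> rfl
  map_smul' a p := by cases j <;> rfl

open Matrix in
/-- For `(so_{2n}, gl_n)` with `n = 2k+1` odd, let `c ⊆ g₁` be the Cartan subspace of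
matrices `antidiag(X, X)` with `X` skew-symmetric and supported on the anti-diagonal
(`X i j = 0` unless `i + j + 1 = n`, in `0`-indexed form), and for
`ξ = antidiag(X, Y), η = antidiag(Z, U) ∈ g₁` let `D₁(ξ, η) = (X|Z)` be the `n × 2n`
concatenation of the upper-right blocks.  Then every `(t, h)` in `C₀`, the Zariski
closure of `G₀ • (c × c)` (where `G₀ = {diag(B, (Bᵀ)⁻¹)}` is the group of invertible
matrices preserving the form `J` and commuting with `A = diag(I, -I)`, acting by
conjugation), satisfies `rank D₁(t, h) < n`. -/
theorem rank_bound_on_C0_so2n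
    (K : Type*) [Field K] [IsAlgClosed K] [CharZero K] (n kk : ℕ) (hn : n = 2 * kk + 1) :
    let J : Matrix (Fin n ⊕ Fin n) (Fin n ⊕ Fin n) K := Matrix.fromBlocks 0 1 1 0
    let A : Matrix (Fin n ⊕ Fin n) (Fin n ⊕ Fin n) K := Matrix.fromBlocks 1 0 0 (-1)
    let c : Set (Matrix (Fin n ⊕ Fin n) (Fin n ⊕ Fin n) K) :=
      {ξ | ∃ X : Matrix (Fin n) (Fin n) K, Xᵀ = -X ∧
        (∀ (i : Fin n) (j : Fin n), (i : ℕ) + (j : ℕ) + 1 ≠ n → X i j = 0) ∧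
        ξ = Matrix.fromBlocks 0 X X 0}
    let C₀ : Set (Matrix (Fin n ⊕ Fin n) (Fin n ⊕ Fin n) K ×
        Matrix (Fin n ⊕ Fin n) (Fin n ⊕ Fin n) K) :=
      zClosure K {p | ∃ g : Matrix (Fin n ⊕ Fin n) (Fin n ⊕ Fin n) K, IsUnit g ∧
        gᵀ * J * g = J ∧ g * A = A * g ∧ ∃ x ∈ c, ∃ y ∈ c, p = (g * x * g⁻¹, g * y * g⁻¹)}
    ∀ p ∈ C₀,
      (Matrix.of fun (i : Fin n) =>
        Sum.elim (fun j : Fin n => p.1 (Sum.inl i) (Sum.inr j))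
          (fun j : Fin n => p.2 (Sum.inl i) (Sum.inr j))).rank < n := by
  intro J A c C₀ p hp
  classical
  -- the matrix D₁(p) as a function of p
  set D : (Matrix (Fin n ⊕ Fin n) (Fin n ⊕ Fin n) K ×
      Matrix (Fin n ⊕ Fin n) (Fin n ⊕ Fin n) K) → Matrix (Fin n) (Fin n ⊕ Fin n) K := fun p =>
    Matrix.of fun (i : Fin n) =>
      Sum.elim (fun j : Fin n => p.1 (Sum.inl i) (Sum.inr j))
        (fun j : Fin n => p.2 (Sum.inl i) (Sum.inr j)) with hD
  -- polynomials: the n×n minors of D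
  set q : (Fin n → Fin n ⊕ Fin n) → MvPolynomial (Module.Dual K (Matrix (Fin n ⊕ Fin n) (Fin n ⊕ Fin n) K × Matrix (Fin n ⊕ Fin n) (Fin n ⊕ Fin n) K)) K := fun s =>
    (Matrix.of fun i j : Fin n => (MvPolynomial.X (coordDual K n i (s j)) :
      MvPolynomial (Module.Dual K (Matrix (Fin n ⊕ Fin n) (Fin n ⊕ Fin n) K × Matrix (Fin n ⊕ Fin n) (Fin n ⊕ Fin n) K)) K)).det with hq
  have heval : ∀ (v : Matrix (Fin n ⊕ Fin n) (Fin n ⊕ Fin n) K × Matrix (Fin n ⊕ Fin n) (Fin n ⊕ Fin n) K) (s : Fin n → Fin n ⊕ Fin n),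
      MvPolynomial.eval (fun f : Module.Dual K (Matrix (Fin n ⊕ Fin n) (Fin n ⊕ Fin n) K × Matrix (Fin n ⊕ Fin n) (Fin n ⊕ Fin n) K) => f v) (q s)
        = ((D v).submatrix id s).det := by
    intro v s
    rw [hq]
    rw [RingHom.map_det]
    congr 1
    ext i j
    rcases hsj : s j with j' | j' <;>
      simp [Matrix.map_apply, coordDual, hD, hsj]
  -- generators satisfy rank < n, hence all minors vanish
  have hgen : ∀ v ∈ {p : Matrix (Fin n ⊕ Fin n) (Fin n ⊕ Fin n) K × Matrix (Fin n ⊕ Fin n) (Fin n ⊕ Fin n) K | ∃ g : Matrix (Fin n ⊕ Fin n) (Fin n ⊕ Fin n) K, IsUnit g ∧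
      gᵀ * J * g = J ∧ g * A = A * g ∧ ∃ x ∈ c, ∃ y ∈ c, p = (g * x * g⁻¹, g * y * g⁻¹)},
      (D v).rank < n := by
    rintro v ⟨g, hgu, hgJ, hgA, x, ⟨X, hXskew, hXdiag, rfl⟩, y, ⟨Z, hZskew, hZdiag, rfl⟩, rfl⟩
    obtain ⟨hg, h1, h4⟩ := aux_blocks g hgA hgJ
    set B₁ := g.toBlocks₁₁
    set B₄ := g.toBlocks₂₂
    have hx : g * (fromBlocks 0 X X 0) * g⁻¹ = fromBlocks 0 (B₁ * X * B₁ᵀ) (B₄ * X * B₄ᵀ) 0 := by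
      rw [hg]; exact aux_conj B₁ B₄ X h1 h4
    have hy : g * (fromBlocks 0 Z Z 0) * g⁻¹ = fromBlocks 0 (B₁ * Z * B₁ᵀ) (B₄ * Z * B₄ᵀ) 0 := by
      rw [hg]; exact aux_conj B₁ B₄ Z h1 h4
    -- D of the generator
    set E : Matrix (Fin n) (Fin n ⊕ Fin n) K :=
      Matrix.of fun i => Sum.elim (fun j => X i j) (fun j => Z i j) with hE
    have hDv : D (g * (fromBlocks 0 X X 0) * g⁻¹, g * (fromBlocks 0 Z Z 0) * g⁻¹)
        = B₁ * E * fromBlocks B₁ᵀ 0 0 B₁ᵀ := by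
      ext i j
      rcases j with j | j <;>
        simp [hD, hx, hy, hE, Matrix.mul_apply, Finset.sum_mul,
          Fintype.sum_sum_type, Matrix.fromBlocks_apply₁₂, Matrix.fromBlocks_apply₂₁]
    rw [hDv]
    -- units
    have hB₁det : IsUnit B₁.det := by
      have hcomm : B₁ * B₄ᵀ = 1 := mul_eq_one_comm.mp h4
      exact IsUnit.of_mul_eq_one (a := B₁.det) B₄ᵀ.det (by rw [← Matrix.det_mul, hcomm, Matrix.det_one])
    have hFBdet : IsUnit (fromBlocks B₁ᵀ 0 0 B₁ᵀ :
        Matrix (Fin n ⊕ Fin n) (Fin n ⊕ Fin n) K).det := by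
      rw [Matrix.det_fromBlocks_zero₂₁]
      simpa [Matrix.det_transpose] using hB₁det.mul hB₁det
    rw [Matrix.rank_mul_eq_left_of_isUnit_det _ _ hFBdet,
      Matrix.rank_mul_eq_right_of_isUnit_det _ _ hB₁det]
    -- row kk of E is zero
    have hkk : kk < n := by omega
    apply aux_rank_lt_of_row_zero E ⟨kk, hkk⟩
    intro j
    have hXkk : ∀ j : Fin n, X ⟨kk, hkk⟩ j = 0 := by
      intro j
      by_cases hj : (kk : ℕ) + (j : ℕ) + 1 = n
      · have hjkk : (j : ℕ) = kk := by omega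
        have hj' : j = ⟨kk, hkk⟩ := by ext; exact hjkk
        subst hj'
        have := congrFun (congrFun hXskew ⟨kk, hkk⟩) ⟨kk, hkk⟩
        simp only [Matrix.transpose_apply, Matrix.neg_apply] at this
        linear_combination (1/2 : K) * this
      · exact hXdiag _ _ hj
    have hZkk : ∀ j : Fin n, Z ⟨kk, hkk⟩ j = 0 := by
      intro j
      by_cases hj : (kk : ℕ) + (j : ℕ) + 1 = n
      · have hjkk : (j : ℕ) = kk := by omega
        have hj' : j = ⟨kk, hkk⟩ := by ext; exact hjkk
        subst hj'
        have := congrFun (congrFun hZskew ⟨kk, hkk⟩) ⟨kk, hkk⟩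
        simp only [Matrix.transpose_apply, Matrix.neg_apply] at this
        linear_combination (1/2 : K) * this
      · exact hZdiag _ _ hj
    rcases j with j | j <;> simp [hE, hXkk, hZkk]
  -- transfer to the closure
  have hminors := eval_zero_on_zClosure _ q (fun v hv s => by
    rw [heval]
    exact aux_det_zero_of_rank_lt _ (hgen v hv) s) p hp
  have : ∀ s, ((D p).submatrix id s).det = 0 := fun s => by
    rw [← heval]; exact hminors s
  have := aux_rank_lt_of_dets (D p) this
  simpa [hD] using this
end
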